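/- arXiv:0911.5237 — 2 statements merged into one kernel-verified Lean document; each statement's English description precedes it below -/
import Mathlib

section
/- (Bass) Let R be a semilocal ring (not necessarily commutative), I a left ideal of R, and a ∈ R such that Ra + I = R. Then the coset a + I contains a unit of R. -/
/-!
Units lift along `R → R/rad R`, so it suffices to treat a semisimple ring `R`. There
`R = Ra ⊕ B` with `B ≤ I`. Let `K` be the kernel of `x ↦ x * a` and `C` a complement of it,
so `C ≅ Ra`. From `C ⊕ K ≅ R ≅ C ⊕ B` and cancellation of the finite-length semisimple
module `C` we get `g : K ≅ B`, and `k + c ↦ g k + c * a` is an automorphism of the left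
module `R`, i.e. right multiplication by the unit `g k₁ + a` where `1 = k₁ + c₁`.
-/

namespace IsSemisimpleModule

variable {R M N : Type*} [Ring R] [AddCommGroup M] [Module R M] [AddCommGroup N] [Module R N]

instance prod [IsSemisimpleModule R M] [IsSemisimpleModule R N] :
    IsSemisimpleModule R (M × N) := by
  have := IsSemisimpleModule.sup (IsSemisimpleModule.range (LinearMap.inl R M N))
    (IsSemisimpleModule.range (LinearMap.inr R M N))
  rw [LinearMap.isCompl_range_inl_inr.sup_eq_top] at this
  exact .congr Submodule.topEquiv.symm

end IsSemisimpleModule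

namespace Submodule

variable {R M : Type*} [Ring R] [AddCommGroup M] [Module R M]

noncomputable def prodEquivOfDisjoint {p q : Submodule R M} (h : Disjoint p q) :
    (p × q) ≃ₗ[R] ↥(p ⊔ q) :=
  (LinearEquiv.ofInjective (p.subtype.coprod q.subtype) <| by
      rw [← LinearMap.ker_eq_bot, LinearMap.ker_coprod_of_disjoint_range] <;> simp [h]).trans
    (LinearEquiv.ofEq _ _ <| by simp [LinearMap.range_coprod])

end Submodule

section Cancellation

variable {R M : Type*} [Ring R] [AddCommGroup M] [Module R M]

theorem nonempty_linearEquiv_of_isCompl_of_isSimpleModule [IsSemisimpleModule R M]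
    {S₁ S₂ C₁ C₂ : Submodule R M} [IsSimpleModule R S₁] (e : S₁ ≃ₗ[R] S₂)
    (h₁ : IsCompl S₁ C₁) (h₂ : IsCompl S₂ C₂) : Nonempty (C₁ ≃ₗ[R] C₂) := by
  have : IsSimpleModule R S₂ := .congr e.symm
  have quot₁ := Submodule.quotientEquivOfIsCompl _ _ h₁
  have quot₂ := Submodule.quotientEquivOfIsCompl _ _ h₂
  by_cases hS : S₁ = S₂
  · subst hS
    exact ⟨quot₁.symm.trans quot₂⟩
  have hdisj : Disjoint S₁ S₂ :=
    ((isSimpleModule_iff_isAtom.mp ‹_›).disjoint_of_ne (isSimpleModule_iff_isAtom.mp ‹_›) hS)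
  -- `C₁ ≅ S₂ ⊕ T ≅ S₁ ⊕ T ≅ C₂` for a complement `T` of `S₁ ⊕ S₂`
  obtain ⟨T, hT⟩ := exists_isCompl (S₁ ⊔ S₂)
  have h₁' : IsCompl S₁ (S₂ ⊔ T) := hdisj.isCompl_sup_right_of_isCompl_sup_left hT
  have h₂' : IsCompl S₂ (S₁ ⊔ T) :=
    hdisj.symm.isCompl_sup_right_of_isCompl_sup_left (sup_comm S₁ S₂ ▸ hT)
  have hdisj₁ : Disjoint S₁ T := hT.disjoint.mono_left le_sup_left
  have hdisj₂ : Disjoint S₂ T := hT.disjoint.mono_left le_sup_right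
  exact ⟨quot₁.symm.trans <| (Submodule.quotientEquivOfIsCompl _ _ h₁').trans <|
    (Submodule.prodEquivOfDisjoint hdisj₂).symm.trans <|
    (e.symm.prodCongr (LinearEquiv.refl R T)).trans <|
    (Submodule.prodEquivOfDisjoint hdisj₁).trans <|
    (Submodule.quotientEquivOfIsCompl _ _ h₂').symm.trans quot₂⟩

variable {S B B' : Type*} [AddCommGroup S] [Module R S] [AddCommGroup B] [Module R B]
  [AddCommGroup B'] [Module R B']

theorem nonempty_linearEquiv_of_prod_linearEquiv_prod_of_isSimpleModule [IsSimpleModule R S]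
    [IsSemisimpleModule R B'] (e : (S × B) ≃ₗ[R] (S × B')) : Nonempty (B ≃ₗ[R] B') := by
  have hinl : Function.Injective (e.toLinearMap ∘ₗ LinearMap.inl R S B) :=
    e.injective.comp LinearMap.inl_injective
  have hinr : Function.Injective (e.toLinearMap ∘ₗ LinearMap.inr R S B) :=
    e.injective.comp LinearMap.inr_injective
  have : IsSimpleModule R (LinearMap.range (e.toLinearMap ∘ₗ LinearMap.inl R S B)) :=
    .congr (LinearEquiv.ofInjective _ hinl).symm
  have hcompl : IsCompl (LinearMap.range (e.toLinearMap ∘ₗ LinearMap.inl R S B))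
      (LinearMap.range (e.toLinearMap ∘ₗ LinearMap.inr R S B)) := by
    rw [LinearMap.range_comp, LinearMap.range_comp]
    exact (Submodule.orderIsoMapComap e).isCompl LinearMap.isCompl_range_inl_inr
  obtain ⟨f⟩ := nonempty_linearEquiv_of_isCompl_of_isSimpleModule
    ((LinearEquiv.ofInjective _ hinl).symm.trans
      (LinearEquiv.ofInjective _ LinearMap.inl_injective))
    hcompl LinearMap.isCompl_range_inl_inr
  exact ⟨(LinearEquiv.ofInjective _ hinr).trans <| f.trans
    (LinearEquiv.ofInjective _ LinearMap.inr_injective).symm⟩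

theorem nonempty_linearEquiv_of_prod_linearEquiv_prod {X : Type*} [AddCommGroup X] [Module R X]
    [IsSemisimpleModule R X] [IsSemisimpleModule R B'] (hX : Module.length R X ≠ ⊤)
    (e : (X × B) ≃ₗ[R] (X × B')) : Nonempty (B ≃ₗ[R] B') := by
  obtain ⟨n, hn⟩ := ENat.ne_top_iff_exists.mp hX
  induction n generalizing X with
  | zero =>
    have : Subsingleton X := Module.length_eq_zero_iff.mp hn.symm
    have : Unique X := uniqueOfSubsingleton 0
    exact ⟨(LinearEquiv.uniqueProd).symm.trans (e.trans LinearEquiv.uniqueProd)⟩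
  | succ n ih =>
    have : Nontrivial X := Module.length_pos_iff.mp (by rw [← hn]; exact_mod_cast n.succ_pos)
    obtain ⟨S, _⟩ := IsSemisimpleModule.exists_simple_submodule R X
    obtain ⟨X₁, hX₁⟩ := exists_isCompl S
    have eX := Submodule.prodEquivOfIsCompl S X₁ hX₁
    have hlen : (n : ℕ∞) = Module.length R X₁ := by
      have h := hn.trans eX.length_eq.symm
      rw [Module.length_prod, Module.length_eq_one, Nat.cast_succ, add_comm (1 : ℕ∞)] at h
      exact WithTop.add_right_cancel ENat.one_ne_top h
    obtain ⟨e₁⟩ := nonempty_linearEquiv_of_prod_linearEquiv_prod_of_isSimpleModule <|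
      (LinearEquiv.prodAssoc R S X₁ B).symm.trans <| (eX.prodCongr (LinearEquiv.refl R B)).trans <|
      e.trans <| (eX.symm.prodCongr (LinearEquiv.refl R B')).trans (LinearEquiv.prodAssoc R S X₁ B')
    exact ih (hlen ▸ ENat.natCast_ne_top n) e₁ hlen

end Cancellation

theorem LinearEquiv.isUnit_apply_one {R : Type*} [Semiring R] (e : R ≃ₗ[R] R) : IsUnit (e 1) := by
  have hmul (f : R →ₗ[R] R) (x : R) : f x = x * f 1 := by
    simpa using f.map_smul x 1
  refine ⟨⟨e 1, e.symm 1, ?_, ?_⟩, rfl⟩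
  · simpa using (hmul e.symm.toLinearMap (e 1)).symm
  · simpa using (hmul e.toLinearMap (e.symm 1)).symm

theorem IsSemisimpleRing.exists_mem_isUnit_add {R : Type*} [Ring R] [IsSemisimpleRing R]
    {I : Ideal R} {a : R} (h : Ideal.span {a} ⊔ I = ⊤) : ∃ x ∈ I, IsUnit (a + x) := by
  set φ := LinearMap.toSpanSingleton R R a
  obtain ⟨B, hBI, hB⟩ := (codisjoint_iff.mpr (sup_comm (Ideal.span {a}) I ▸ h)).exists_isCompl
  obtain ⟨C, hC⟩ := exists_isCompl (LinearMap.ker φ)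
  let eC : C ≃ₗ[R] Ideal.span {a} := (Submodule.quotientEquivOfIsCompl _ _ hC).symm.trans <|
    φ.quotKerEquivRange.trans (LinearEquiv.ofEq _ _ (LinearMap.span_singleton_eq_range R R a).symm)
  obtain ⟨g⟩ : Nonempty (LinearMap.ker φ ≃ₗ[R] B) :=
    nonempty_linearEquiv_of_prod_linearEquiv_prod (X := C) Module.length_ne_top <|
      (LinearEquiv.prodComm R _ _).trans <| (Submodule.prodEquivOfIsCompl _ _ hC).trans <|
      (Submodule.prodEquivOfIsCompl _ _ hB).symm.trans <|
      (LinearEquiv.prodComm R _ _).trans (eC.symm.prodCongr (LinearEquiv.refl R B))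
  let ψ : R ≃ₗ[R] R := (Submodule.prodEquivOfIsCompl _ _ hC).symm.trans <|
    (g.prodCongr eC).trans <| Submodule.prodEquivOfIsCompl _ _ hB
  obtain ⟨⟨k, c⟩, hkc⟩ := (Submodule.prodEquivOfIsCompl _ _ hC).surjective 1
  rw [Submodule.coe_prodEquivOfIsCompl'] at hkc
  have hc : φ c = a := by
    calc φ c = φ (k + c) := by rw [map_add, LinearMap.mem_ker.mp k.2, zero_add]
      _ = a := by simp [hkc, φ]
  have hψ : ψ 1 = g k + a := by
    simpa [ψ, eC, ← hkc] using hc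
  refine ⟨g k, hBI (g k).2, ?_⟩
  rw [add_comm, ← hψ]
  exact ψ.isUnit_apply_one

theorem isUnit_of_sub_one_mem_jacobson_bot {R : Type*} [Ring R] {r : R}
    (h : r - 1 ∈ Ideal.jacobson (⊥ : Ideal R)) : IsUnit r := by
  have left_inv {x : R} (hx : x - 1 ∈ Ideal.jacobson ⊥) : ∃ y, y * x = 1 := by
    simpa [sub_eq_zero] using Ideal.exists_mul_sub_mem_of_sub_one_mem_jacobson x hx
  obtain ⟨s, hs⟩ := left_inv h
  have hs' : s - 1 ∈ Ideal.jacobson ⊥ := by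
    have : s - 1 = -(s * (r - 1)) := by rw [mul_sub, hs, mul_one, neg_sub]
    exact this ▸ neg_mem (Ideal.mul_mem_left _ s h)
  obtain ⟨t, ht⟩ := left_inv hs'
  have htr : t = r := left_inv_eq_right_inv ht hs
  exact ⟨⟨r, s, htr ▸ ht, hs⟩, rfl⟩

theorem isLocalHom_of_ker_le_jacobson_bot {R S : Type*} [Ring R] [Ring S] {f : R →+* S}
    (hf : Function.Surjective f) (hker : RingHom.ker f ≤ Ideal.jacobson ⊥) : IsLocalHom f where
  map_nonunit x hx := by
    obtain ⟨y, hy⟩ := hf ↑hx.unit⁻¹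
    have hxy : IsUnit (x * y) := isUnit_of_sub_one_mem_jacobson_bot <| hker <| by
      simp [RingHom.mem_ker, hy]
    have hyx : IsUnit (y * x) := isUnit_of_sub_one_mem_jacobson_bot <| hker <| by
      simp [RingHom.mem_ker, hy]
    obtain ⟨b, hb⟩ := hxy.exists_right_inv
    obtain ⟨c, hc⟩ := hyx.exists_left_inv
    exact isUnit_iff_exists_and_exists.mpr
      ⟨⟨y * b, by rw [← mul_assoc, hb]⟩, ⟨c * y, by rw [mul_assoc, hc]⟩⟩

/-- Bass: Let `R` be a semilocal ring (not necessarily commutative),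
`I` a left ideal of `R`, and `a ∈ R` such that `Ra + I = R`. Then the coset `a + I`
contains a unit of `R`. Semilocal means `R/rad(R)` is semisimple artinian. -/
theorem unit_in_coset_of_semilocal {R : Type*} [Ring R]
    (hsemilocal : IsSemisimpleRing
      (RingCon.Quotient (TwoSidedIdeal.jacobson (⊥ : TwoSidedIdeal R)).ringCon))
    (I : Ideal R) (a : R) (h : Ideal.span {a} ⊔ I = ⊤) :
    ∃ x ∈ I, IsUnit (a + x) := by
  set π := (TwoSidedIdeal.jacobson (⊥ : TwoSidedIdeal R)).ringCon.mk'
  have hπ : Function.Surjective π := RingCon.mk'_surjective _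
  have : IsLocalHom π := isLocalHom_of_ker_le_jacobson_bot hπ fun x hx => by
    simpa [← TwoSidedIdeal.mem_asIdeal, TwoSidedIdeal.asIdeal_jacobson] using
      (TwoSidedIdeal.ker_ringCon_mk' _).le ((TwoSidedIdeal.mem_ker π).mpr hx)
  obtain ⟨y, hy, hunit⟩ := IsSemisimpleRing.exists_mem_isUnit_add (I := I.map π) (a := π a) <| by
    rw [← Set.image_singleton, ← Ideal.map_span, ← Ideal.map_sup, h, Ideal.map_top]
  obtain ⟨x, hx, rfl⟩ := (Ideal.mem_map_iff_of_surjective π hπ).mp hy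
  exact ⟨x, hx, (isUnit_map_iff π _).mp (by rwa [map_add])⟩
end

section
/- Let R be a semisimple artinian ring which is simple (or more generally a product of simple rings), e an idempotent, f = 1 - e, and b ∈ R. If f·R·b ⊆ Re, then b ∈ Re. -/
/-- Let `R` be a semisimple artinian ring (a product of simple rings),
`e` an idempotent, `f = 1 - e`, and `b ∈ R`. If `f·R·b ⊆ Re`, then `b ∈ Re`. -/
theorem mem_left_ideal_of_compl_mul_subset {R : Type*} [Ring R] [IsSemisimpleRing R]
    (e b : R) (he : e * e = e)
    (h : ∀ r : R, (1 - e) * r * b ∈ Ideal.span ({e} : Set R)) :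
    b ∈ Ideal.span ({e} : Set R) := by
  set c := b * (1 - e) with hc
  have hkey : ∀ r : R, c * r * c = 0 := by
    intro r
    obtain ⟨s, hs⟩ := Submodule.mem_span_singleton.mp (h r)
    have hs' : s * e = (1 - e) * r * b := hs
    have h1 : (1 - e) * r * b * (1 - e) = 0 := by
      rw [← hs']
      rw [mul_sub, mul_one, mul_assoc, he, sub_self]
    calc c * r * c = b * ((1 - e) * r * b * (1 - e)) := by
          simp only [hc, mul_assoc]
      _ = 0 := by rw [h1, mul_zero]
  obtain ⟨g, hg, hspan⟩ := IsSemisimpleRing.ideal_eq_span_idempotent (Ideal.span {c})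
  have hgmem : g ∈ Ideal.span ({c} : Set R) := by
    rw [hspan]; exact Ideal.subset_span rfl
  obtain ⟨r, hr⟩ := Submodule.mem_span_singleton.mp hgmem
  have hg0 : g = 0 := by
    have : g * g = 0 := by
      rw [← hr]
      show r * c * (r * c) = 0
      calc r * c * (r * c) = r * (c * r * c) := by simp only [mul_assoc]
        _ = 0 := by rw [hkey, mul_zero]
    rw [← hg.eq, this]
  have hc0 : c = 0 := by
    have : c ∈ Ideal.span ({c} : Set R) := Ideal.subset_span rfl
    rw [hspan, hg0] at this
    simpa [Set.singleton_zero, Ideal.span_zero, Ideal.mem_bot] using this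
  have hb : b = b * e := by
    have h2 : b - b * e = 0 := by
      have := hc0
      rw [hc, mul_sub, mul_one] at this
      exact this
    exact (sub_eq_zero.mp h2)
  rw [hb]
  exact Submodule.mem_span_singleton.mpr ⟨b, rfl⟩
end
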